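/- arXiv:1803.11423 — 2 statements merged into one kernel-verified Lean document; each statement's English description precedes it below -/
import Mathlib

section
/- Let T be a tree and G a connected graph with 2·n(G) ≤ ℓ(T), where ℓ(T) is the number of leaves of T. Then sg(T □ G) = sg(T) = ℓ(T). -/
open SimpleGraph

/-- A choice of one fixed shortest path (geodesic) between each pair of vertices,
symmetric in the sense that the path from `v` to `u` is the reverse of the one
from `u` to `v`. -/
def StrongGeodeticChoice {V : Type*} (G : SimpleGraph V) (p : ∀ u v : V, G.Walk u v) : Prop :=
  ∀ u v : V, (p u v).IsPath ∧ (p u v).length = G.dist u v ∧ p v u = (p u v).reverse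

/-- `S` is a strong geodetic set of `G`: one can fix one shortest path between each
pair of vertices of `S` so that every vertex of `G` lies on some fixed path. -/
def IsStrongGeodeticSet {V : Type*} (G : SimpleGraph V) (S : Set V) : Prop :=
  ∃ p : ∀ u v : V, G.Walk u v, StrongGeodeticChoice G p ∧
    ∀ w : V, ∃ u ∈ S, ∃ v ∈ S, w ∈ (p u v).support

/-- The strong geodetic number of `G`. -/
noncomputable def sg {V : Type*} (G : SimpleGraph V) : ℕ :=
  sInf {n | ∃ S : Set V, S.ncard = n ∧ IsStrongGeodeticSet G S}

/-- The strong geodetic core number of `G`: the minimum, over minimum strong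
geodetic sets `S` together with a choice of fixed geodesics witnessing them,
of the size of a subset `X ⊆ S` such that the fixed paths with an endpoint in `X`
already cover all vertices. -/
noncomputable def sgc {V : Type*} (G : SimpleGraph V) : ℕ :=
  sInf {k | ∃ (S X : Set V) (p : ∀ u v : V, G.Walk u v),
    StrongGeodeticChoice G p ∧ S.ncard = sg G ∧
    (∀ w : V, ∃ u ∈ S, ∃ v ∈ S, w ∈ (p u v).support) ∧
    X ⊆ S ∧ X.ncard = k ∧
    (∀ w : V, ∃ u ∈ X, ∃ v ∈ S, w ∈ (p u v).support)}

/-- `A` is a geodetic set: every vertex lies on some shortest path between two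
vertices of `A`. -/
def IsGeodeticSet {V : Type*} (G : SimpleGraph V) (A : Set V) : Prop :=
  ∀ w : V, ∃ u ∈ A, ∃ v ∈ A, ∃ q : G.Walk u v, q.length = G.dist u v ∧ w ∈ q.support

/-- The geodetic number of `G`. -/
noncomputable def geodeticNumber {V : Type*} (G : SimpleGraph V) : ℕ :=
  sInf {n | ∃ A : Set V, A.ncard = n ∧ IsGeodeticSet G A}

/-!
A leaf is never an interior vertex of a geodesic, and distances in `T □ G` are sums of distances
in the factors; so every strong geodetic set of `T` contains the leaves, and every strong geodetic
set of `T □ G` projects onto a superset of the leaves.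

For the converse, label the leaves surjectively by `W × Bool` (possible as `2 n(G) ≤ ℓ(T)`), lift
each leaf `a` to the level of `G` named by its label, and join two lifted leaves by an L-shaped
geodesic whose `T`-part runs in the level `labelLevel` of their labels. A vertex `(x, w)` is
covered: `x` lies on a path between two leaves, hence, by the median property of trees, on the
path between the two leaves labelled `(w, ·)` or on the paths from some leaf to both of them, and
`labelLevel` sends one of these pairs to level `w`.
-/

lemma Set.exists_surjOn_univ_of_card_le_ncard {α β : Type*} [Finite β] [Nonempty β]
    {s : Set α} (hs : s.Finite) (h : Nat.card β ≤ s.ncard) :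
    ∃ f : α → β, Set.SurjOn f s Set.univ := by
  obtain ⟨e⟩ : Nonempty (β ↪ s) := by
    have := Fintype.ofFinite β
    have := hs.fintype
    apply Function.Embedding.nonempty_of_card_le
    rwa [← Nat.card_eq_fintype_card, ← Nat.card_eq_fintype_card, Nat.card_coe_set_eq]
  refine ⟨Function.invFun (fun b => (e b : α)), fun b _ => ⟨e b, (e b).2, ?_⟩⟩
  exact Function.leftInverse_invFun (Subtype.val_injective.comp e.injective) b

namespace SimpleGraph

section Geodesics

variable {V : Type*} {G : SimpleGraph V}

lemma sg_eq_ncard {S : Set V} (hS : IsStrongGeodeticSet G S)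
    (hmin : ∀ S', IsStrongGeodeticSet G S' → S.ncard ≤ S'.ncard) : sg G = S.ncard :=
  le_antisymm (Nat.sInf_le ⟨S, rfl, hS⟩)
    (le_csInf ⟨_, S, rfl, hS⟩ fun _ ⟨S', hS'n, hS'⟩ => hS'n ▸ hmin S' hS')

lemma exists_strongGeodeticChoice_of_length_eq_dist (p : ∀ u v, G.Walk u v)
    (hp : ∀ u v, (p u v).length = G.dist u v) :
    ∃ q, StrongGeodeticChoice G q ∧ ∀ u v, q u v = p u v ∨ q v u = p v u := by
  let : LinearOrder V := WellOrderingRel.isWellOrder.linearOrder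
  have hnil (u : V) : p u u = .nil :=
    Walk.eq_nil_iff_nil.2 <| Walk.length_eq_zero_iff.1 <| by rw [hp, dist_self]
  refine ⟨fun u v => if u ≤ v then p u v else (p v u).reverse,
    fun u v => ⟨?_, ?_, ?_⟩, fun u v => ?_⟩
  · dsimp only
    split
    · exact (p u v).isPath_of_length_eq_dist (hp u v)
    · exact ((p v u).isPath_of_length_eq_dist (hp v u)).reverse
  · dsimp only
    split <;> simp [hp, dist_comm]
  · rcases lt_trichotomy u v with h | rfl | h
    · simp [h.le, h.not_ge]
    · simp [hnil]
    · simp [h.le, h.not_ge]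
  · rcases le_total u v with h | h
    · exact .inl (if_pos h)
    · exact .inr (if_pos h)

lemma Connected.exists_strongGeodeticChoice (hG : G.Connected) :
    ∃ p, StrongGeodeticChoice G p := by
  choose p hp using hG.exists_walk_length_eq_dist
  exact (exists_strongGeodeticChoice_of_length_eq_dist p hp).imp fun _ h => h.1

lemma Walk.dist_add_dist_of_mem_support {u v w : V} {p : G.Walk u v}
    (hp : p.length = G.dist u v) (hw : w ∈ p.support) :
    G.dist u w + G.dist w v = G.dist u v := by
  classical
  have hsplit := congrArg Walk.length (p.take_spec hw)
  rw [Walk.length_append] at hsplit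
  have h₁ := G.dist_le (p.takeUntil w hw)
  have h₂ := G.dist_le (p.dropUntil w hw)
  have h₃ := (p.takeUntil w hw).reachable.dist_triangle_left v
  omega

end Geodesics

section Trees

variable {V : Type*} {G : SimpleGraph V}

lemma Connected.eq_or_eq_of_dist_add_dist_eq_of_degree_eq_one (hG : G.Connected) {l x y : V}
    [Fintype (G.neighborSet l)] (hl : G.degree l = 1)
    (h : G.dist x l + G.dist l y = G.dist x y) : l = x ∨ l = y := by
  obtain ⟨z, -, hz⟩ := degree_eq_one_iff_existsUnique_adj.1 hl
  -- every walk leaving the leaf `l` passes through its unique neighbour `z`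
  have hcloser (u : V) (hu : l ≠ u) : G.dist z u + 1 ≤ G.dist l u := by
    obtain ⟨p, hp⟩ := hG.exists_walk_length_eq_dist l u
    have hnil : ¬p.Nil := fun h => hu h.eq
    have htail : G.dist p.snd u ≤ p.length - 1 := (G.dist_le p.tail).trans_eq p.length_tail
    rw [hz _ (p.adj_snd hnil)] at htail
    have := p.not_nil_iff_lt_length.1 hnil
    omega
  by_contra! hne
  have hx := hcloser x hne.1
  have hy := hcloser y hne.2
  have htri : G.dist x y ≤ G.dist x z + G.dist z y := hG.dist_triangle
  rw [dist_comm (u := x) (v := z)] at htri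
  rw [dist_comm (u := x) (v := l)] at h
  omega

lemma IsAcyclic.mem_support_or_mem_support (hG : G.IsAcyclic) {a b c x : V} {p : G.Walk a b}
    (hp : p.IsPath) (hx : x ∈ p.support) (q : G.Walk a c) (r : G.Walk b c) :
    x ∈ q.support ∨ x ∈ r.support := by
  classical
  have hbypass : (q.append r.reverse).bypass = p :=
    congrArg Subtype.val <| (hG.subsingleton_path a b).elim ⟨_, Walk.bypass_isPath _⟩ ⟨p, hp⟩
  rw [← hbypass] at hx
  simpa [Walk.mem_support_append_iff] using Walk.support_bypass_subset_support _ hx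

lemma exists_isPath_mem_support_forall_length_le [Fintype V] (x : V) :
    ∃ (u v : V) (p : G.Walk u v), p.IsPath ∧ x ∈ p.support ∧
      ∀ (u' v' : V) (p' : G.Walk u' v'), p'.IsPath → x ∈ p'.support → p'.length ≤ p.length := by
  let s := {n | ∃ (u v : V) (p : G.Walk u v), p.IsPath ∧ x ∈ p.support ∧ p.length = n}
  have hs : s.Finite := (Set.finite_Iio (Fintype.card V)).subset
    fun _ ⟨_, _, _, hp, _, hn⟩ => hn ▸ hp.length_lt
  obtain ⟨_, ⟨u, v, p, hp, hx, rfl⟩, hmax⟩ := hs.exists_maximal ⟨0, x, x, .nil, by simp⟩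
  exact ⟨u, v, p, hp, hx, fun u' v' p' hp' hx' => by
    have := @hmax p'.length ⟨u', v', p', hp', hx', rfl⟩
    omega⟩

/-- In a tree, both ends of a longest path through `x` are leaves. -/
lemma IsTree.exists_isPath_degree_eq_one_mem_support [Fintype V] [DecidableRel G.Adj]
    [Nontrivial V] (hG : G.IsTree) (x : V) :
    ∃ (a b : V) (p : G.Walk a b), p.IsPath ∧ G.degree a = 1 ∧ G.degree b = 1 ∧ x ∈ p.support := by
  obtain ⟨a, b, p, hp, hx, hmax⟩ := exists_isPath_mem_support_forall_length_le (G := G) x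
  obtain ⟨y, hxy⟩ := hG.connected.preconnected.exists_adj_of_nontrivial x
  have hnil : ¬p.Nil := fun h => by
    simpa [h.length_eq_zero] using hmax _ _ (Walk.cons hxy .nil) (by simp [hxy.ne]) (by simp)
  have hstart : ∀ {u v : V} (q : G.Walk u v), q.IsPath → x ∈ q.support → ¬q.Nil →
      q.length = p.length → G.degree u = 1 := by
    intro u v q hq hxq hqnil hlen
    refine degree_eq_one_iff_existsUnique_adj.2 ⟨_, q.adj_snd hqnil, fun w hw => ?_⟩
    refine hG.isAcyclic.eq_snd_of_adj_start hq hw (by_contra fun hwq => ?_)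
    have := hmax _ _ (Walk.cons hw.symm q) (hq.cons hwq) (by simp [hxq])
    simp only [Walk.length_cons] at this
    omega
  refine ⟨a, b, p, hp, hstart p hp hx hnil rfl, ?_, hx⟩
  exact hstart p.reverse hp.reverse (by simpa using hx) (by simpa using hnil) (by simp)

lemma IsTree.isStrongGeodeticSet_setOf_degree_eq_one [Fintype V] [DecidableRel G.Adj]
    [Nontrivial V] (hG : G.IsTree) : IsStrongGeodeticSet G {v | G.degree v = 1} := by
  obtain ⟨p, hp⟩ := hG.connected.exists_strongGeodeticChoice
  refine ⟨p, hp, fun x => ?_⟩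
  obtain ⟨a, b, q, hq, ha, hb, hx⟩ := hG.exists_isPath_degree_eq_one_mem_support x
  exact ⟨a, ha, b, hb, (hG.existsUnique_path a b).unique hq (hp a b).1 ▸ hx⟩

lemma Connected.setOf_degree_eq_one_subset [Fintype V] [DecidableRel G.Adj] (hG : G.Connected)
    {S : Set V} (hS : IsStrongGeodeticSet G S) : {v | G.degree v = 1} ⊆ S := by
  obtain ⟨p, hp, hcover⟩ := hS
  intro l hl
  obtain ⟨u, hu, v, hv, hlp⟩ := hcover l
  rcases hG.eq_or_eq_of_dist_add_dist_eq_of_degree_eq_one hl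
    (Walk.dist_add_dist_of_mem_support (hp u v).2.1 hlp) with rfl | rfl
  exacts [hu, hv]

end Trees

section BoxProd

variable {α β : Type*} {G : SimpleGraph α} {H : SimpleGraph β}

lemma Connected.dist_boxProd (hG : G.Connected) (hH : H.Connected) (x y : α × β) :
    (G □ H).dist x y = G.dist x.1 y.1 + H.dist x.2 y.2 := by
  have h := edist_boxProd (G := G) (H := H) x y
  rw [← ((hG.boxProd hH).preconnected x y).coe_dist_eq_edist,
    ← (hG.preconnected x.1 y.1).coe_dist_eq_edist,
    ← (hH.preconnected x.2 y.2).coe_dist_eq_edist] at h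
  exact_mod_cast h

lemma Walk.length_boxProdLeft {a₁ a₂ : α} (b : β) (p : G.Walk a₁ a₂) :
    (p.boxProdLeft H b).length = p.length :=
  Walk.length_map _ _

lemma Walk.length_boxProdRight {b₁ b₂ : β} (a : α) (q : H.Walk b₁ b₂) :
    (q.boxProdRight G a).length = q.length :=
  Walk.length_map _ _

lemma Walk.mk_mem_support_boxProdLeft {a₁ a₂ a : α} (b : β) {p : G.Walk a₁ a₂}
    (ha : a ∈ p.support) : (a, b) ∈ (p.boxProdLeft H b).support :=
  (Walk.support_map _ p).symm ▸ List.mem_map_of_mem ha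

/-- An L-shaped walk whose `G`-part runs in level `c` whenever `c` is `b₁` or `b₂`. -/
def Walk.boxProdCorner [DecidableEq β] {a₁ a₂ : α} {b₁ b₂ : β} (p : G.Walk a₁ a₂)
    (q : H.Walk b₁ b₂) (c : β) : (G □ H).Walk (a₁, b₁) (a₂, b₂) :=
  if c = b₂ then (q.boxProdRight G a₁).append (p.boxProdLeft H b₂)
  else (p.boxProdLeft H b₁).append (q.boxProdRight G a₂)

variable [DecidableEq β] {a₁ a₂ : α} {b₁ b₂ : β} (p : G.Walk a₁ a₂) (q : H.Walk b₁ b₂) (c : β)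

lemma Walk.length_boxProdCorner : (p.boxProdCorner q c).length = p.length + q.length := by
  unfold boxProdCorner
  split <;> rw [Walk.length_append, Walk.length_boxProdLeft, Walk.length_boxProdRight]
  exact add_comm _ _

lemma Walk.mk_mem_support_boxProdCorner {a : α} (ha : a ∈ p.support) (hc : c = b₁ ∨ c = b₂) :
    (a, c) ∈ (p.boxProdCorner q c).support := by
  unfold boxProdCorner
  split_ifs with h
  · exact (Walk.mem_support_append_iff _ _).2 (.inr (h ▸ Walk.mk_mem_support_boxProdLeft c ha))
  · exact (Walk.mem_support_append_iff _ _).2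
      (.inl (hc.resolve_right h ▸ Walk.mk_mem_support_boxProdLeft c ha))

end BoxProd

section Labelling

variable {W : Type*} [LinearOrder W]

/-- For labels on distinct levels, each row and each column of the `2 × 2` table indexed by the
two `Bool`s contains both levels. -/
def labelLevel (a b : W × Bool) : W :=
  if a.2 = b.2 then max a.1 b.1 else min a.1 b.1

lemma labelLevel_comm (a b : W × Bool) : labelLevel a b = labelLevel b a := by
  simp only [labelLevel, eq_comm (a := a.2), max_comm, min_comm]

lemma labelLevel_eq_or_eq (a b : W × Bool) : labelLevel a b = a.1 ∨ labelLevel a b = b.1 := by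
  unfold labelLevel
  split
  · exact max_choice _ _
  · exact min_choice _ _

lemma labelLevel_mk_mk (w : W) (s t : Bool) : labelLevel (w, s) (w, t) = w := by
  simp [labelLevel]

lemma exists_labelLevel_eq (a : W × Bool) (w : W) : ∃ t, labelLevel a (w, t) = w := by
  rcases le_total a.1 w with h | h
  · exact ⟨a.2, by simp [labelLevel, h]⟩
  · exact ⟨!a.2, by simp [labelLevel, h]⟩

variable {V : Type*} [Fintype V] {T : SimpleGraph V} [DecidableRel T.Adj] [Nontrivial V]

lemma IsTree.exists_mem_support_labelLevel_eq (hT : T.IsTree) {pT : ∀ a b, T.Walk a b}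
    (hpT : ∀ a b, (pT a b).IsPath) {f : V → W × Bool}
    (hf : Set.SurjOn f {a | T.degree a = 1} Set.univ) (x : V) (w : W) :
    ∃ a b, T.degree a = 1 ∧ T.degree b = 1 ∧ x ∈ (pT a b).support ∧
      labelLevel (f a) (f b) = w := by
  choose c hc hfc using fun t : Bool => hf (Set.mem_univ (w, t))
  obtain ⟨a, b, p, hp, ha, hb, hx⟩ := hT.exists_isPath_degree_eq_one_mem_support x
  obtain ⟨a', ha', hxa'⟩ : ∃ a', T.degree a' = 1 ∧ x ∈ (pT a' (c false)).support :=
    (hT.isAcyclic.mem_support_or_mem_support hp hx _ _).elim (⟨a, ha, ·⟩) (⟨b, hb, ·⟩)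
  rcases hT.isAcyclic.mem_support_or_mem_support (hpT _ _) hxa' (pT a' (c true))
    (pT (c false) (c true)) with hxa'' | hxc
  · obtain ⟨t, ht⟩ := exists_labelLevel_eq (f a') w
    refine ⟨a', c t, ha', hc t, ?_, by rw [hfc, ht]⟩
    cases t
    exacts [hxa', hxa'']
  · exact ⟨c false, c true, hc false, hc true, hxc, by rw [hfc, hfc, labelLevel_mk_mk]⟩

variable {G : SimpleGraph W}

lemma IsTree.isStrongGeodeticSet_boxProd (hT : T.IsTree) (hG : G.Connected) {f : V → W × Bool}
    (hf : Set.SurjOn f {a | T.degree a = 1} Set.univ) :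
    IsStrongGeodeticSet (T □ G) ((fun a => (a, (f a).1)) '' {a | T.degree a = 1}) := by
  classical
  obtain ⟨pT, hpT⟩ := hT.connected.exists_strongGeodeticChoice
  obtain ⟨pG, hpG⟩ := hG.exists_strongGeodeticChoice
  let P (u v : V × W) : (T □ G).Walk u v :=
    (pT u.1 v.1).boxProdCorner (pG u.2 v.2) (labelLevel (f u.1) (f v.1))
  have hP (u v : V × W) : (P u v).length = (T □ G).dist u v := by
    simp only [P, Walk.length_boxProdCorner, hT.connected.dist_boxProd hG, (hpT _ _).2.1,
      (hpG _ _).2.1]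
  have hmem {x a b : V} (hx : x ∈ (pT a b).support) :
      (x, labelLevel (f a) (f b)) ∈ (P (a, (f a).1) (b, (f b).1)).support :=
    Walk.mk_mem_support_boxProdCorner _ _ _ hx (labelLevel_eq_or_eq _ _)
  obtain ⟨q, hq, hqP⟩ := exists_strongGeodeticChoice_of_length_eq_dist P hP
  refine ⟨q, hq, fun ⟨x, w⟩ => ?_⟩
  obtain ⟨a, b, ha, hb, hx, rfl⟩ :=
    hT.exists_mem_support_labelLevel_eq (fun a b => (hpT a b).1) hf x w
  have hx' : x ∈ (pT b a).support := by simpa [(hpT a b).2.2] using hx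
  rcases hqP (a, (f a).1) (b, (f b).1) with h | h
  · exact ⟨_, ⟨a, ha, rfl⟩, _, ⟨b, hb, rfl⟩, h ▸ hmem hx⟩
  · exact ⟨_, ⟨b, hb, rfl⟩, _, ⟨a, ha, rfl⟩, h ▸ labelLevel_comm (f a) (f b) ▸ hmem hx'⟩

end Labelling

section LowerBound

variable {α β : Type*} [Fintype α] {G : SimpleGraph α} [DecidableRel G.Adj] {H : SimpleGraph β}

lemma Connected.setOf_degree_eq_one_subset_image_fst (hG : G.Connected) (hH : H.Connected)
    {S : Set (α × β)} (hS : IsStrongGeodeticSet (G □ H) S) :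
    {a | G.degree a = 1} ⊆ Prod.fst '' S := by
  obtain ⟨p, hp, hcover⟩ := hS
  obtain ⟨b⟩ := hH.nonempty
  intro l hl
  obtain ⟨u, hu, v, hv, hlp⟩ := hcover (l, b)
  have hsplit := Walk.dist_add_dist_of_mem_support (hp u v).2.1 hlp
  simp only [hG.dist_boxProd hH] at hsplit
  have hG' : G.dist u.1 v.1 ≤ G.dist u.1 l + G.dist l v.1 := hG.dist_triangle
  have hH' : H.dist u.2 v.2 ≤ H.dist u.2 b + H.dist b v.2 := hH.dist_triangle
  rcases hG.eq_or_eq_of_dist_add_dist_eq_of_degree_eq_one (x := u.1) (y := v.1) hl (by omega)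
    with h | h
  exacts [⟨u, hu, h.symm⟩, ⟨v, hv, h.symm⟩]

end LowerBound

end SimpleGraph

theorem stmt15_general {V W : Type*} [Fintype V] [Fintype W]
    (T : SimpleGraph V) [DecidableRel T.Adj] (hT : T.IsTree)
    (G : SimpleGraph W) (hG : G.Connected)
    (hl : 2 * Fintype.card W ≤ ({v : V | T.degree v = 1} : Set V).ncard) :
    sg (T □ G) = ({v : V | T.degree v = 1} : Set V).ncard ∧
    sg T = ({v : V | T.degree v = 1} : Set V).ncard := by
  let : LinearOrder W := LinearOrder.lift' (Fintype.equivFin W) (Fintype.equivFin W).injective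
  have : Nonempty W := hG.nonempty
  obtain ⟨f, hf⟩ := Set.exists_surjOn_univ_of_card_le_ncard (β := W × Bool) (Set.toFinite _)
    (by simpa [Nat.card_eq_fintype_card, mul_comm] using hl)
  have : Nontrivial V := by
    obtain ⟨a, ha, -⟩ := hf (Set.mem_univ (Classical.arbitrary (W × Bool)))
    obtain ⟨z, hz, -⟩ := degree_eq_one_iff_existsUnique_adj.1 ha
    exact hz.nontrivial
  have hinj : (fun a => (a, (f a).1)).Injective := fun _ _ h => congrArg Prod.fst h
  refine ⟨(sg_eq_ncard (hT.isStrongGeodeticSet_boxProd hG hf) fun S hS => ?_).trans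
      (Set.ncard_image_of_injective _ hinj),
    sg_eq_ncard hT.isStrongGeodeticSet_setOf_degree_eq_one fun S hS =>
      Set.ncard_le_ncard (hT.connected.setOf_degree_eq_one_subset hS)⟩
  calc _ = ({v : V | T.degree v = 1} : Set V).ncard := Set.ncard_image_of_injective _ hinj
    _ ≤ (Prod.fst '' S).ncard :=
      Set.ncard_le_ncard (hT.connected.setOf_degree_eq_one_subset_image_fst hG hS)
    _ ≤ S.ncard := Set.ncard_image_le

theorem stmt15 {V W : Type*} [Fintype V] [Fintype W]
    (T : SimpleGraph V) [DecidableRel T.Adj] (hT : T.IsTree)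
    (h3 : 3 ≤ Fintype.card V)
    (G : SimpleGraph W) (hG : G.Connected)
    (hl : 2 * Fintype.card W ≤ ({v : V | T.degree v = 1} : Set V).ncard) :
    sg (T □ G) = ({v : V | T.degree v = 1} : Set V).ncard ∧
    sg T = ({v : V | T.degree v = 1} : Set V).ncard :=
  stmt15_general T hT G hG hl
end

section
/- For k ≥ 4 and n ≥ 2, sg(G_{k,n} □ K_n) ≤ k·n + 1, where G_{k,n} is the graph obtained from K_k by replacing every edge with n internally disjoint paths of length 2 and adding a universal vertex. Combined with sg(G_{k,n}) = C(k,2)(n−1) + k, this shows sg(G □ K_n) can be strictly smaller than sg(G). -/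
open SimpleGraph

/-- The graph `G_{k,n}`: obtained from `K_k` by replacing every edge with `n`
internally disjoint paths of length 2 and adding one universal vertex.
Vertices: the `k` original vertices, the subdivision vertices `x_{ij}^{(l)}`
(indexed by an ordered pair `i < j` and `l ∈ Fin n`), and the universal vertex. -/
def Gkn (k n : ℕ) :
    SimpleGraph (Fin k ⊕ ({p : Fin k × Fin k // p.1 < p.2} × Fin n ⊕ Unit)) :=
  SimpleGraph.fromRel (fun a b =>
    match a, b with
    | Sum.inl i, Sum.inr (Sum.inl m) => i = m.1.1.1 ∨ i = m.1.1.2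
    | _, Sum.inr (Sum.inr _) => True
    | _, _ => False)

/-!
Take `S = {(x_i, t)}`, the `k n` copies of the branch vertices. Two of them in the same layer
are joined by the geodesic `(x_i, t) (u, t) (x_j, t)`, and for `i < j` and layers `s ≠ t` the
fixed geodesic from `(x_i, s)` to `(x_j, t)` is
`(x_i, s) (x_{ij}^{(s)}, s) (x_{ij}^{(s)}, t) (x_j, t)`: orienting by `i < j` rather than
choosing the index symmetrically in `s, t` is what lets these paths reach every subdivision
vertex `(x_{ij}^{(l)}, t)` (take `s = l`, and any other layer when `t = l`). Hence `sg ≤ k n`.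
-/

namespace SimpleGraph

variable {V : Type*} {G : SimpleGraph V}

theorem sg_le_ncard {S : Set V} (hS : IsStrongGeodeticSet G S) : sg G ≤ S.ncard :=
  Nat.sInf_le ⟨S, rfl, hS⟩

theorem exists_strongGeodeticChoice (hG : G.Preconnected) :
    ∃ p : ∀ u v : V, G.Walk u v, StrongGeodeticChoice G p := by
  choose g hg using fun u v => (hG u v).exists_walk_length_eq_dist
  -- orient every pair by an arbitrary linear order, and reverse against it
  let _ : LinearOrder V := WellOrderingRel.isWellOrder.linearOrder
  classical
  have hdiag (u : V) : g u u = Walk.nil :=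
    Walk.eq_nil_iff_nil.mpr (Walk.length_eq_zero_iff.mp (by simp [hg]))
  refine ⟨fun u v => if u ≤ v then g u v else (g v u).reverse, fun u v => ?_⟩
  have hrev (a b : V) : (g b a).reverse.length = G.dist a b := by
    rw [Walk.length_reverse, hg, dist_comm]
  dsimp only
  rcases lt_trichotomy u v with huv | rfl | huv
  · rw [if_pos huv.le, if_neg huv.not_ge]
    exact ⟨(g u v).isPath_of_length_eq_dist (hg u v), hg u v, rfl⟩
  · rw [if_pos le_rfl, hdiag]
    exact ⟨Walk.IsPath.nil, by simp, rfl⟩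
  · rw [if_neg huv.not_ge, if_pos huv.le, Walk.reverse_reverse]
    exact ⟨(g v u).reverse.isPath_of_length_eq_dist (hrev u v), hrev u v, rfl⟩

end SimpleGraph

namespace Gkn

variable {k n : ℕ}

abbrev Vertex (k n : ℕ) : Type := Fin k ⊕ ({p : Fin k × Fin k // p.1 < p.2} × Fin n ⊕ Unit)

def univ : Vertex k n := Sum.inr (Sum.inr ())

/-- The subdivision vertex `x_{ij}^{(l)}`, for `e = (i, j)`. -/
def subdiv (e : {p : Fin k × Fin k // p.1 < p.2}) (l : Fin n) : Vertex k n :=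
  Sum.inr (Sum.inl (e, l))

theorem adj_univ {a : Vertex k n} (ha : a ≠ univ) : (Gkn k n).Adj a univ :=
  (fromRel_adj _ _ _).mpr ⟨ha, Or.inl (by rcases a with _ | _ | _ <;> trivial)⟩

theorem not_adj_inl_inl (i j : Fin k) : ¬ (Gkn k n).Adj (Sum.inl i) (Sum.inl j) := by
  rintro ⟨-, h | h⟩ <;> exact h

theorem adj_subdiv_fst (e : {p : Fin k × Fin k // p.1 < p.2}) (l : Fin n) :
    (Gkn k n).Adj (Sum.inl e.1.1) (subdiv e l) :=
  (fromRel_adj _ _ _).mpr ⟨Sum.inl_ne_inr, Or.inl (Or.inl rfl)⟩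

theorem adj_subdiv_snd (e : {p : Fin k × Fin k // p.1 < p.2}) (l : Fin n) :
    (Gkn k n).Adj (Sum.inl e.1.2) (subdiv e l) :=
  (fromRel_adj _ _ _).mpr ⟨Sum.inl_ne_inr, Or.inl (Or.inr rfl)⟩

theorem preconnected : (Gkn k n).Preconnected := fun a b => by
  have reach (c) : (Gkn k n).Reachable c univ := by
    by_cases hc : c = univ
    · exact hc ▸ Reachable.refl _
    · exact (adj_univ hc).reachable
  exact (reach a).trans (reach b).symm

theorem edist_inl_inl {i j : Fin k} (hij : i ≠ j) :
    (Gkn k n).edist (Sum.inl i) (Sum.inl j) = 2 :=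
  edist_eq_two_iff.mpr ⟨by simpa using hij, not_adj_inl_inl i j,
    ⟨univ, adj_univ Sum.inl_ne_inr, adj_univ Sum.inl_ne_inr⟩⟩

theorem dist_boxProd_inl_inl {i j : Fin k} (hij : i ≠ j) (s t : Fin n) :
    (Gkn k n □ completeGraph (Fin n)).dist (Sum.inl i, s) (Sum.inl j, t) =
      if s = t then 2 else 3 := by
  rw [SimpleGraph.dist, edist_boxProd, edist_inl_inl hij]
  split_ifs with hst
  · simp [hst]
  · rw [edist_top_of_ne hst]
    rfl

def walkViaUniv (i j : Fin k) {s t : Fin n} (hst : s = t) :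
    (Gkn k n □ completeGraph (Fin n)).Walk (Sum.inl i, s) (Sum.inl j, t) :=
  .cons (v := (univ, s)) (boxProd_adj_left.mpr (adj_univ Sum.inl_ne_inr))
    (.cons (boxProd_adj.mpr (Or.inl ⟨(adj_univ Sum.inl_ne_inr).symm, hst⟩)) .nil)

def walkViaSubdiv (e : {p : Fin k × Fin k // p.1 < p.2}) (l : Fin n) {s t : Fin n}
    (hst : s ≠ t) :
    (Gkn k n □ completeGraph (Fin n)).Walk (Sum.inl e.1.1, s) (Sum.inl e.1.2, t) :=
  .cons (boxProd_adj_left.mpr (adj_subdiv_fst e l))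
    (.cons (v := (subdiv e l, t)) (boxProd_adj_right.mpr hst)
      (.cons (boxProd_adj_left.mpr (adj_subdiv_snd e l).symm) .nil))

def branchGeodesic {i j : Fin k} (hij : i ≠ j) (s t : Fin n) :
    (Gkn k n □ completeGraph (Fin n)).Walk (Sum.inl i, s) (Sum.inl j, t) :=
  if hst : s = t then walkViaUniv i j hst
  else if h : i < j then walkViaSubdiv ⟨(i, j), h⟩ s hst
  else (walkViaSubdiv ⟨(j, i), hij.symm.lt_of_le (not_lt.mp h)⟩ t (Ne.symm hst)).reverse

theorem support_walkViaUniv (i j : Fin k) {s t : Fin n} (hst : s = t) :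
    (walkViaUniv i j hst).support = [(Sum.inl i, s), (univ, s), (Sum.inl j, t)] :=
  rfl

theorem support_walkViaSubdiv (e : {p : Fin k × Fin k // p.1 < p.2}) (l : Fin n) {s t : Fin n}
    (hst : s ≠ t) :
    (walkViaSubdiv e l hst).support =
      [(Sum.inl e.1.1, s), (subdiv e l, s), (subdiv e l, t), (Sum.inl e.1.2, t)] :=
  rfl

theorem branchGeodesic_of_eq {i j : Fin k} (hij : i ≠ j) {s t : Fin n} (hst : s = t) :
    branchGeodesic hij s t = walkViaUniv i j hst :=
  dif_pos hst

theorem branchGeodesic_of_lt {i j : Fin k} (h : i < j) {s t : Fin n} (hst : s ≠ t) :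
    branchGeodesic h.ne s t = walkViaSubdiv ⟨(i, j), h⟩ s hst := by
  rw [branchGeodesic, dif_neg hst, dif_pos h]

theorem branchGeodesic_length {i j : Fin k} (hij : i ≠ j) (s t : Fin n) :
    (branchGeodesic hij s t).length =
      (Gkn k n □ completeGraph (Fin n)).dist (Sum.inl i, s) (Sum.inl j, t) := by
  rw [dist_boxProd_inl_inl hij, branchGeodesic]
  split_ifs <;> rfl

theorem branchGeodesic_symm {i j : Fin k} (hij : i ≠ j) (s t : Fin n) :
    branchGeodesic hij.symm t s = (branchGeodesic hij s t).reverse := by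
  unfold branchGeodesic
  by_cases hst : s = t
  · subst hst
    simp only [dite_true]
    rfl
  · rcases hij.lt_or_gt with h | h <;> simp [hst, Ne.symm hst, h, h.not_gt]

def withBranchGeodesics
    (p : ∀ a b : Vertex k n × Fin n, (Gkn k n □ completeGraph (Fin n)).Walk a b) :
    ∀ a b, (Gkn k n □ completeGraph (Fin n)).Walk a b
  | (Sum.inl i, s), (Sum.inl j, t) => if hij : i = j then p _ _ else branchGeodesic hij s t
  | a, b => p a b

theorem withBranchGeodesics_inl_inl
    (p : ∀ a b : Vertex k n × Fin n, (Gkn k n □ completeGraph (Fin n)).Walk a b)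
    {i j : Fin k} (hij : i ≠ j) (s t : Fin n) :
    withBranchGeodesics p (Sum.inl i, s) (Sum.inl j, t) = branchGeodesic hij s t := by
  simp [withBranchGeodesics, hij]

theorem strongGeodeticChoice_withBranchGeodesics
    {p : ∀ a b : Vertex k n × Fin n, (Gkn k n □ completeGraph (Fin n)).Walk a b}
    (hp : StrongGeodeticChoice _ p) : StrongGeodeticChoice _ (withBranchGeodesics p) := by
  rintro ⟨a | a, s⟩ ⟨b | b, t⟩
  · by_cases hab : a = b
    · subst hab
      simpa [withBranchGeodesics] using hp _ _
    · rw [withBranchGeodesics_inl_inl p hab, withBranchGeodesics_inl_inl p (Ne.symm hab)]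
      have hlen := branchGeodesic_length hab s t
      exact ⟨(branchGeodesic hab s t).isPath_of_length_eq_dist hlen, hlen,
        branchGeodesic_symm hab s t⟩
  all_goals exact hp _ _

def branchLayers (k n : ℕ) : Set (Vertex k n × Fin n) :=
  Set.range (Prod.map Sum.inl id)

theorem ncard_branchLayers : (branchLayers k n).ncard = k * n := by
  rw [branchLayers,
    Set.ncard_range_of_injective (Sum.inl_injective.prodMap Function.injective_id)]
  simp

theorem inl_mem_branchLayers (i : Fin k) (t : Fin n) :
    ((Sum.inl i, t) : Vertex k n × Fin n) ∈ branchLayers k n :=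
  ⟨(i, t), rfl⟩

theorem exists_mem_branchLayers_mem_support (hk : 2 ≤ k) (hn : 2 ≤ n)
    (p : ∀ a b : Vertex k n × Fin n, (Gkn k n □ completeGraph (Fin n)).Walk a b)
    (w : Vertex k n × Fin n) :
    ∃ a ∈ branchLayers k n, ∃ b ∈ branchLayers k n,
      w ∈ (withBranchGeodesics p a b).support := by
  rcases w with ⟨i | ⟨⟨⟨i, j⟩, hij⟩, l⟩ | _, t⟩
  · exact ⟨_, inl_mem_branchLayers i t, _, inl_mem_branchLayers i t, Walk.start_mem_support _⟩
  · have : Nontrivial (Fin n) := Fin.nontrivial_iff_two_le.mpr hn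
    obtain ⟨t', hlt', ht⟩ : ∃ t', l ≠ t' ∧ (t = l ∨ t = t') := by
      by_cases htl : t = l
      · obtain ⟨t', ht'⟩ := exists_ne l
        exact ⟨t', ht'.symm, Or.inl htl⟩
      · exact ⟨t, Ne.symm htl, Or.inr rfl⟩
    refine ⟨_, inl_mem_branchLayers i l, _, inl_mem_branchLayers j t', ?_⟩
    rw [withBranchGeodesics_inl_inl p hij.ne, branchGeodesic_of_lt hij hlt', support_walkViaSubdiv]
    rcases ht with rfl | rfl <;> simp [subdiv]
  · have : Nontrivial (Fin k) := Fin.nontrivial_iff_two_le.mpr hk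
    obtain ⟨i, j, hij⟩ := exists_pair_ne (Fin k)
    refine ⟨_, inl_mem_branchLayers i t, _, inl_mem_branchLayers j t, ?_⟩
    rw [withBranchGeodesics_inl_inl p hij, branchGeodesic_of_eq hij rfl, support_walkViaUniv]
    simp [univ]

end Gkn

theorem stmt18 (k n : ℕ) (hk : 4 ≤ k) (hn : 2 ≤ n) :
    sg (Gkn k n □ completeGraph (Fin n)) ≤ k * n + 1 := by
  obtain ⟨p, hp⟩ := exists_strongGeodeticChoice
    (Gkn.preconnected.boxProd preconnected_top)
  have hS : IsStrongGeodeticSet (Gkn k n □ completeGraph (Fin n)) (Gkn.branchLayers k n) :=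
    ⟨_, Gkn.strongGeodeticChoice_withBranchGeodesics hp,
      Gkn.exists_mem_branchLayers_mem_support (by omega) hn p⟩
  calc sg (Gkn k n □ completeGraph (Fin n)) ≤ (Gkn.branchLayers k n).ncard := sg_le_ncard hS
    _ = k * n := Gkn.ncard_branchLayers
    _ ≤ k * n + 1 := Nat.le_succ _
end
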